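/- arXiv:2406.02071 — 2 statements merged into one kernel-verified Lean document; each statement's English description precedes it below -/
import Mathlib

section
/- Let V : X → ℝ≥0 on a normed space X satisfy ψ₁(‖x‖) ≤ V(x) ≤ ψ₂(‖x‖) for ψ₁, ψ₂ ∈ K∞, and suppose along all trajectories V(φ(t,x,u)) ≤ e^{−ct} V(x) + g(‖u‖) for some c > 0 and g ∈ K. Then the system is ISS with β(r,t) = ψ₁⁻¹(2 e^{−ct} ψ₂(r)) and γ(r) = ψ₁⁻¹(2 g(r)). -/
open Set Filter

/-- a coercive Lyapunov function with exponential decay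
estimate along trajectories yields the ISS estimate
‖φ(t,x,u)‖ ≤ ψ₁⁻¹(2 e^{-ct} ψ₂(‖x‖)) + ψ₁⁻¹(2 g(‖u‖)). -/
theorem lyapunov_decay_implies_iss
    {X U : Type*} [NormedAddCommGroup X] [NormedAddCommGroup U]
    (φ : ℝ → X → U → X) (V : X → ℝ) (ψ₁ ψ₂ ψ₁inv g : ℝ → ℝ) (c : ℝ)
    (hc : 0 < c)
    -- ψ₁, ψ₂ ∈ K∞
    (hψ₁cont : Continuous ψ₁) (hψ₁mono : StrictMonoOn ψ₁ (Ici 0))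
    (hψ₁0 : ψ₁ 0 = 0) (hψ₁inf : Tendsto ψ₁ atTop atTop)
    (hψ₂cont : Continuous ψ₂) (hψ₂mono : StrictMonoOn ψ₂ (Ici 0))
    (hψ₂0 : ψ₂ 0 = 0) (hψ₂inf : Tendsto ψ₂ atTop atTop)
    -- ψ₁inv is the inverse of ψ₁ on ℝ≥0, monotone
    (hinv₁ : ∀ s ≥ (0:ℝ), ψ₁inv (ψ₁ s) = s)
    (hinv₂ : ∀ s ≥ (0:ℝ), 0 ≤ ψ₁inv s ∧ ψ₁ (ψ₁inv s) = s)
    (hinvmono : MonotoneOn ψ₁inv (Ici 0))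
    -- g ∈ K
    (hgcont : Continuous g) (hgmono : StrictMonoOn g (Ici 0)) (hg0 : g 0 = 0)
    (hgnonneg : ∀ s ≥ (0:ℝ), 0 ≤ g s)
    -- sandwich bound
    (hVnonneg : ∀ x : X, 0 ≤ V x)
    (hsand : ∀ x : X, ψ₁ ‖x‖ ≤ V x ∧ V x ≤ ψ₂ ‖x‖)
    -- decay estimate along trajectories
    (hdecay : ∀ t ≥ (0:ℝ), ∀ (x : X) (u : U),
      V (φ t x u) ≤ Real.exp (-c * t) * V x + g ‖u‖) :
    ∀ t ≥ (0:ℝ), ∀ (x : X) (u : U),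
      ‖φ t x u‖ ≤ ψ₁inv (2 * Real.exp (-c * t) * ψ₂ ‖x‖) + ψ₁inv (2 * g ‖u‖) := by
  intro t ht x u
  set a : ℝ := Real.exp (-c * t) * ψ₂ ‖x‖ with ha
  set b : ℝ := g ‖u‖ with hb
  have hψ₂x : ψ₂ 0 ≤ ψ₂ ‖x‖ :=
    hψ₂mono.monotoneOn (mem_Ici.2 le_rfl) (norm_nonneg x) (norm_nonneg x)
  have ha0 : 0 ≤ a := mul_nonneg (Real.exp_pos _).le (by linarith [hψ₂x, hψ₂0] : 0 ≤ ψ₂ ‖x‖)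
  have hb0 : 0 ≤ b := hgnonneg _ (norm_nonneg u)
  -- key: V(φ) ≤ a + b
  have hV : ψ₁ ‖φ t x u‖ ≤ a + b := by
    calc ψ₁ ‖φ t x u‖ ≤ V (φ t x u) := (hsand _).1
    _ ≤ Real.exp (-c * t) * V x + g ‖u‖ := hdecay t ht x u
    _ ≤ a + b := by
        have := (hsand x).2
        have : Real.exp (-c * t) * V x ≤ a :=
          mul_le_mul_of_nonneg_left this (Real.exp_pos _).le
        linarith
  have hn : ‖φ t x u‖ = ψ₁inv (ψ₁ ‖φ t x u‖) := (hinv₁ _ (norm_nonneg _)).symm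
  have hmax : a + b ≤ max (2 * a) (2 * b) := by
    rcases le_total a b with h | h
    · calc a + b ≤ b + b := by linarith
      _ = 2 * b := by ring
      _ ≤ _ := le_max_right _ _
    · calc a + b ≤ a + a := by linarith
      _ = 2 * a := by ring
      _ ≤ _ := le_max_left _ _
  have hab0 : 0 ≤ ψ₁ ‖φ t x u‖ := by
    have := hψ₁mono.monotoneOn (mem_Ici.2 le_rfl) (norm_nonneg (φ t x u)) (norm_nonneg _)
    linarith [hψ₁0]
  have hmono : ψ₁inv (ψ₁ ‖φ t x u‖) ≤ ψ₁inv (max (2 * a) (2 * b)) :=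
    hinvmono hab0 (le_trans (by positivity) (le_max_left (2*a) (2*b))) (hV.trans hmax)
  have hfin : ψ₁inv (max (2 * a) (2 * b)) ≤ ψ₁inv (2 * a) + ψ₁inv (2 * b) := by
    rcases max_cases (2 * a) (2 * b) with ⟨he, _⟩ | ⟨he, _⟩
    · rw [he]; linarith [(hinv₂ (2*b) (by linarith)).1]
    · rw [he]; linarith [(hinv₂ (2*a) (by linarith)).1]
  have : ψ₁inv (2 * Real.exp (-c * t) * ψ₂ ‖x‖) = ψ₁inv (2 * a) := by rw [ha]; ring_nf
  rw [this, hn]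
  calc ψ₁inv (ψ₁ ‖φ t x u‖) ≤ _ := hmono
  _ ≤ _ := hfin
end

section
/- Monotone trajectory lemma for implication-form Lyapunov functions: let v : ℝ≥0 → ℝ≥0 be continuous, let w ≥ 0 be a constant, and suppose that at every t where v(t) > w, the upper right Dini derivative satisfies D⁺v(t) ≤ −α(v(t)) for a positive definite continuous α (α(s) > 0 for s > 0, α(0)=0). Then v(t) ≤ max(v(0), w) for all t ≥ 0. -/
/-! For every level `c > max (v 0) w` the set `{v ≤ c}` is invariant: at a time where `v` touches
`c` we have `c > w ≥ 0`, so `D⁺v ≤ -α c < 0` and `v` drops below `c` immediately afterwards.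
Letting `c` decrease to `max (v 0) w` gives the bound; the level `w` itself cannot be used
directly, since there the dissipation inequality says nothing. -/

open Set Filter Topology

/-- The upper right Dini derivative `D⁺v(t)`. Where the difference quotients are unbounded above,
the real `limsup` takes the junk value `0` instead of `+∞`. -/
noncomputable def upperRightDini (v : ℝ → ℝ) (t : ℝ) : ℝ :=
  limsup (fun h => (v (t + h) - v t) / h) (𝓝[>] 0)

theorem Real.eventually_neg_of_limsup_neg {ι : Type*} {f : Filter ι} {u : ι → ℝ}
    (h : limsup u f < 0) : ∀ᶠ i in f, u i < 0 := by
  by_cases hbdd : f.IsBoundedUnder (· ≤ ·) u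
  · exact eventually_lt_of_limsup_lt h hbdd
  · rw [Real.limsup_of_not_isBoundedUnder hbdd] at h
    exact absurd h (lt_irrefl 0)

theorem eventually_lt_of_upperRightDini_neg {v : ℝ → ℝ} {t : ℝ} (hD : upperRightDini v t < 0) :
    ∀ᶠ h in 𝓝[>] 0, v (t + h) < v t := by
  filter_upwards [Real.eventually_neg_of_limsup_neg hD, self_mem_nhdsWithin] with h hneg hpos
  rw [div_lt_iff₀ hpos, zero_mul, sub_neg] at hneg
  exact hneg

theorem image_le_of_upperRightDini_neg_boundary {v : ℝ → ℝ} {a b c : ℝ}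
    (hv : ContinuousOn v (Icc a b)) (ha : v a ≤ c)
    (hdini : ∀ x ∈ Ico a b, v x = c → upperRightDini v x < 0) :
    ∀ ⦃x⦄, x ∈ Icc a b → v x ≤ c := by
  change Icc a b ⊆ {x | v x ≤ c}
  have hclosed : IsClosed ({x | v x ≤ c} ∩ Icc a b) := by
    rw [inter_comm]
    exact hv.preimage_isClosed_of_isClosed isClosed_Icc isClosed_Iic
  refine hclosed.Icc_subset_of_forall_exists_gt ha ?_
  rintro x ⟨hxc : v x ≤ c, hx⟩ y hy
  rcases hxc.lt_or_eq with hlt | heq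
  · have hnear : ∀ᶠ z in 𝓝[>] x, v z < c :=
      nhdsWithin_le_of_mem (Icc_mem_nhdsGT_of_mem hx)
        (hv x (Ico_subset_Icc_self hx) (Iio_mem_nhds hlt))
    obtain ⟨z, hzc, hz⟩ := (hnear.and (Ioc_mem_nhdsGT hy)).exists
    exact ⟨z, hzc.le, hz⟩
  · obtain ⟨h, hdec, hh⟩ := ((eventually_lt_of_upperRightDini_neg (hdini x hx heq)).and
      (Ioo_mem_nhdsGT (sub_pos.2 hy))).exists
    refine ⟨x + h, (hdec.trans_eq heq).le, ?_, ?_⟩ <;> linarith [hh.1, hh.2]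

theorem sublevel_invariance_general (v : ℝ → ℝ) (w : ℝ) (α : ℝ → ℝ)
    (hvcont : Continuous v)
    (hw : 0 ≤ w)
    (hαpos : ∀ s > (0:ℝ), 0 < α s)
    (hdini : ∀ t ≥ (0:ℝ), v t > w →
      Filter.limsup (fun h : ℝ => (v (t + h) - v t) / h)
        (nhdsWithin 0 (Set.Ioi 0)) ≤ -α (v t)) :
    ∀ t ≥ (0:ℝ), v t ≤ max (v 0) w := by
  intro t ht
  refine le_of_forall_gt_imp_ge_of_dense fun c hc => ?_
  have hwc : w < c := (le_max_right _ _).trans_lt hc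
  refine image_le_of_upperRightDini_neg_boundary hvcont.continuousOn
    ((le_max_left _ _).trans hc.le) (fun x hx hxc => ?_) ⟨ht, le_rfl⟩
  have hαc : 0 < α (v x) := hαpos _ (hxc ▸ hw.trans_lt hwc)
  exact (hdini x hx.1 (hxc ▸ hwc)).trans_lt (neg_neg_of_pos hαc)

/-- invariance of sublevel sets for implication-form Lyapunov
dissipation inequalities with Dini derivatives. -/
theorem sublevel_invariance (v : ℝ → ℝ) (w : ℝ) (α : ℝ → ℝ)
    (hvcont : Continuous v) (hvnonneg : ∀ t ≥ (0:ℝ), 0 ≤ v t)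
    (hw : 0 ≤ w)
    (hαcont : Continuous α) (hα0 : α 0 = 0) (hαpos : ∀ s > (0:ℝ), 0 < α s)
    (hdini : ∀ t ≥ (0:ℝ), v t > w →
      Filter.limsup (fun h : ℝ => (v (t + h) - v t) / h)
        (nhdsWithin 0 (Set.Ioi 0)) ≤ -α (v t)) :
    ∀ t ≥ (0:ℝ), v t ≤ max (v 0) w :=
  sublevel_invariance_general v w α hvcont hw hαpos hdini
end
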